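/- arXiv:math/9807059 — 5 statements merged into one kernel-verified Lean document; each statement's English description precedes it below -/
import Mathlib

section
/- Over ℤ[1/2], the quotient of the polynomial ring ℤ[1/2][q_1, q_2, …] by the ideal generated by the coefficients of the relation q(T)q(−T) = 1 is a polynomial algebra on the images of the odd-indexed generators q_1, q_3, q_5, …. Equivalently, in this quotient each even generator q_{2i} is a polynomial (with coefficients in ℤ[1/2]) in q_1, q_3, …, q_{2i−1}. -/
open MvPolynomial

noncomputable section

/-- The base ring ℤ[1/2]. -/
def Zhalf : Type := Localization.Away (2 : ℤ)

noncomputable instance : CommRing Zhalf :=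
  inferInstanceAs (CommRing (Localization.Away (2 : ℤ)))

/-- The polynomial ring `ℤ[1/2][q_1, q_2, …]`, with variables indexed by `ℕ+`. -/
abbrev Phalf := MvPolynomial ℕ+ Zhalf

/-- `q_n` for `n ≥ 1` is the variable `X n`; `q_0 = 1`. -/
def qgen (n : ℕ) : Phalf := if h : 0 < n then X (⟨n, h⟩ : ℕ+) else 1

/-- The ideal generated by the coefficients `r_n = ∑_{j+k=n} (-1)^k q_j q_k` (`n ≥ 1`)
of the relation `q(T)q(-T) = 1`. -/
def Ihalf : Ideal Phalf :=
  Ideal.span { r | ∃ n : ℕ, 1 ≤ n ∧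
    r = ∑ jk ∈ Finset.HasAntidiagonal.antidiagonal n, (-1 : Phalf) ^ jk.2 * qgen jk.1 * qgen jk.2 }

/-- Schur's algebra over ℤ[1/2]. -/
abbrev DeltaHalf := Phalf ⧸ Ihalf

/-! ### Auxiliary material -/

section Gen
variable {A : Type*} [CommRing A]

/-- The "relation sum" for an arbitrary sequence. -/
def rsum (g : ℕ → A) (n : ℕ) : A :=
  ∑ jk ∈ Finset.HasAntidiagonal.antidiagonal n, (-1 : A) ^ jk.2 * g jk.1 * g jk.2

lemma rsum_odd (g : ℕ → A) {n : ℕ} (hn : Odd n) : rsum g n = 0 := by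
  refine Finset.sum_involution (fun a _ => a.swap) (fun a ha => ?_) (fun a ha _ h => ?_)
    (fun a ha => ?_) (fun a ha => ?_)
  · rw [Finset.HasAntidiagonal.mem_antidiagonal] at ha
    have h : (-1 : A) ^ a.2 = -(-1 : A) ^ a.1 := by
      rcases Nat.even_or_odd a.1 with h1 | h1
      · have h2 : Odd a.2 := by
          rcases Nat.even_or_odd a.2 with h2 | h2
          · exact absurd (ha ▸ Even.add h1 h2) (Nat.not_even_iff_odd.mpr hn)
          · exact h2
        rw [h1.neg_one_pow, h2.neg_one_pow]
      · have h2 : Even a.2 := by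
          rcases Nat.even_or_odd a.2 with h2 | h2
          · exact h2
          · exact absurd (ha ▸ Odd.add_odd h1 h2) (Nat.not_even_iff_odd.mpr hn)
        rw [h1.neg_one_pow, h2.neg_one_pow, neg_neg]
    simp only [Prod.fst_swap, Prod.snd_swap]
    rw [h]; ring
  · rw [Finset.HasAntidiagonal.mem_antidiagonal] at ha
    have := congrArg Prod.fst h
    simp only [Prod.fst_swap] at this
    rcases hn with ⟨m, hm⟩
    omega
  · rw [Finset.HasAntidiagonal.mem_antidiagonal] at ha ⊢
    simpa [add_comm] using ha
  · simp

lemma rsum_split (g : ℕ → A) (hg0 : g 0 = 1) {n : ℕ} (hn : 1 ≤ n) :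
    rsum g n =
      (∑ jk ∈ (Finset.HasAntidiagonal.antidiagonal n).filter (fun jk => 0 < jk.1 ∧ 0 < jk.2),
        (-1 : A) ^ jk.2 * g jk.1 * g jk.2) + ((-1 : A) ^ n + 1) * g n := by
  classical
  rw [rsum, ← Finset.sum_filter_add_sum_filter_not (Finset.HasAntidiagonal.antidiagonal n)
    (fun jk => 0 < jk.1 ∧ 0 < jk.2)]
  congr 1
  have hset : (Finset.HasAntidiagonal.antidiagonal n).filter (fun jk => ¬(0 < jk.1 ∧ 0 < jk.2))
      = {((0 : ℕ), n), (n, 0)} := by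
    ext jk
    simp only [Finset.mem_filter, Finset.HasAntidiagonal.mem_antidiagonal, Finset.mem_insert,
      Finset.mem_singleton, Prod.ext_iff]
    omega
  rw [hset, Finset.sum_pair (by simp; omega : ((0 : ℕ), n) ≠ (n, 0))]
  simp [hg0]
  ring

end Gen

/-- One half in `Zhalf`. -/
noncomputable def half : Zhalf :=
  (IsLocalization.Away.invSelf (2 : ℤ) : Localization.Away (2 : ℤ))

lemma two_mul_half : (2 : Zhalf) * half = 1 := by
  have h := IsLocalization.Away.mul_invSelf (S := Localization.Away (2 : ℤ)) (2 : ℤ)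
  have h2 : (algebraMap ℤ (Localization.Away (2 : ℤ))) (2 : ℤ) = (2 : Zhalf) := by
    simp [Zhalf]
    rfl
  rw [h2] at h
  exact h

/-- The candidate images of the generators `q_n` in the polynomial ring on the odd
generators. -/
noncomputable def V : ℕ → MvPolynomial ℕ Zhalf
  | 0 => 1
  | (n + 1) =>
    if h : (n + 1) % 2 = 1 then X (n / 2)
    else C (-half) *
      ∑ jk ∈ ((Finset.HasAntidiagonal.antidiagonal (n + 1)).filter
          (fun jk => 0 < jk.1 ∧ 0 < jk.2)).attach,
        (-1 : MvPolynomial ℕ Zhalf) ^ (jk.1.2) * V jk.1.1 * V jk.1.2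
  decreasing_by
  · have := jk.2
    simp only [Finset.mem_filter, Finset.HasAntidiagonal.mem_antidiagonal] at this
    omega
  · have := jk.2
    simp only [Finset.mem_filter, Finset.HasAntidiagonal.mem_antidiagonal] at this
    omega

lemma V_zero : V 0 = 1 := by rw [V]

lemma V_odd (k : ℕ) : V (2 * k + 1) = X k := by
  rw [V]
  rw [dif_pos (by omega)]
  congr 1
  omega

lemma V_even {n : ℕ} (h1 : 1 ≤ n) (h2 : n % 2 = 0) :
    V n = C (-half) *
      ∑ jk ∈ (Finset.HasAntidiagonal.antidiagonal n).filter (fun jk => 0 < jk.1 ∧ 0 < jk.2),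
        (-1 : MvPolynomial ℕ Zhalf) ^ jk.2 * V jk.1 * V jk.2 := by
  obtain ⟨m, rfl⟩ : ∃ m, n = m + 1 := ⟨n - 1, by omega⟩
  rw [V, dif_neg (by omega)]
  congr 1
  exact Finset.sum_attach _ (fun jk : ℕ × ℕ => (-1 : MvPolynomial ℕ Zhalf) ^ jk.2 * V jk.1 * V jk.2)

lemma two_C_neg_half : (2 : MvPolynomial ℕ Zhalf) * C (-half) = -1 := by
  have : (2 : MvPolynomial ℕ Zhalf) = C (2 : Zhalf) := (map_ofNat (C : Zhalf →+* MvPolynomial ℕ Zhalf) 2).symm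
  rw [this, ← C_mul, mul_neg, two_mul_half]
  simp

lemma rsum_V {n : ℕ} (hn : 1 ≤ n) : rsum V n = 0 := by
  rcases Nat.even_or_odd n with he | ho
  · rw [rsum_split V V_zero hn, he.neg_one_pow]
    rw [V_even hn (Nat.even_iff.mp he)]
    set S := ∑ jk ∈ (Finset.HasAntidiagonal.antidiagonal n).filter (fun jk => 0 < jk.1 ∧ 0 < jk.2),
        (-1 : MvPolynomial ℕ Zhalf) ^ jk.2 * V jk.1 * V jk.2 with hS
    have : (1 + 1 : MvPolynomial ℕ Zhalf) * (C (-half) * S) = -S := by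
      rw [show (1 + 1 : MvPolynomial ℕ Zhalf) = 2 by norm_num, ← mul_assoc,
        two_C_neg_half]
      ring
    rw [this]; ring
  · exact rsum_odd V ho

/-- The algebra map `Phalf → ℤ[1/2][x₀, x₁, …]` sending `qₙ` to `V n`. -/
noncomputable def phi : Phalf →ₐ[Zhalf] MvPolynomial ℕ Zhalf :=
  aeval (fun p : ℕ+ => V p)

lemma qgen_coe (p : ℕ+) : qgen (p : ℕ) = X p := by
  have hp : 0 < (p : ℕ) := p.2
  rw [qgen]
  split
  · rfl
  · omega

lemma phi_qgen (n : ℕ) : phi (qgen n) = V n := by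
  rcases Nat.eq_zero_or_pos n with rfl | hn
  · simp [qgen, V_zero, phi]
  · rw [qgen, dif_pos hn, phi]
    exact aeval_X _ _


lemma phi_rel {n : ℕ} (hn : 1 ≤ n) :
    phi (∑ jk ∈ Finset.HasAntidiagonal.antidiagonal n, (-1 : Phalf) ^ jk.2 * qgen jk.1 * qgen jk.2)
      = 0 := by
  rw [map_sum]
  have : ∀ jk ∈ Finset.HasAntidiagonal.antidiagonal n,
      phi ((-1 : Phalf) ^ jk.2 * qgen jk.1 * qgen jk.2)
        = (-1 : MvPolynomial ℕ Zhalf) ^ jk.2 * V jk.1 * V jk.2 := by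
    intro jk _
    rw [map_mul, map_mul, map_pow, map_neg, map_one, phi_qgen, phi_qgen]
  rw [Finset.sum_congr rfl this]
  exact rsum_V hn

lemma phi_vanish : ∀ a ∈ Ihalf, phi a = 0 := by
  intro a ha
  have hle : Ihalf ≤ RingHom.ker (phi : Phalf →ₐ[Zhalf] MvPolynomial ℕ Zhalf) := by
    rw [Ihalf, Ideal.span_le]
    rintro r ⟨n, hn, rfl⟩
    exact phi_rel hn
  exact hle ha

/-- The induced algebra map on the quotient. -/
noncomputable def psi : DeltaHalf →ₐ[Zhalf] MvPolynomial ℕ Zhalf :=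
  Ideal.Quotient.liftₐ Ihalf phi phi_vanish

lemma psi_mk (a : Phalf) : psi (Ideal.Quotient.mk Ihalf a) = phi a :=
  Ideal.Quotient.liftₐ_apply Ihalf phi phi_vanish a

/-- abbreviation for the map in the theorem -/
noncomputable def Fmap : MvPolynomial ℕ Zhalf →ₐ[Zhalf] DeltaHalf :=
  MvPolynomial.aeval (fun k : ℕ => Ideal.Quotient.mk Ihalf (qgen (2 * k + 1)))

lemma rel_zero_in_quotient {n : ℕ} (hn : 1 ≤ n) :
    rsum (fun j => Ideal.Quotient.mk Ihalf (qgen j)) n = 0 := by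
  have hmem : (∑ jk ∈ Finset.HasAntidiagonal.antidiagonal n,
      (-1 : Phalf) ^ jk.2 * qgen jk.1 * qgen jk.2) ∈ Ihalf :=
    Ideal.subset_span ⟨n, hn, rfl⟩
  have := (Ideal.Quotient.eq_zero_iff_mem).mpr hmem
  rw [← this, rsum, map_sum]
  refine Finset.sum_congr rfl fun jk _ => ?_
  rw [map_mul, map_mul, map_pow, map_neg, map_one]

lemma Fmap_V {n : ℕ} (hn : 1 ≤ n) : Fmap (V n) = Ideal.Quotient.mk Ihalf (qgen n) := by
  induction n using Nat.strong_induction_on with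
  | _ n ih =>
    rcases Nat.even_or_odd n with he | ho
    · have h2 : n % 2 = 0 := Nat.even_iff.mp he
      rw [V_even hn h2, map_mul, map_sum]
      have hsum : ∀ jk ∈ (Finset.HasAntidiagonal.antidiagonal n).filter (fun jk => 0 < jk.1 ∧ 0 < jk.2),
          Fmap ((-1 : MvPolynomial ℕ Zhalf) ^ jk.2 * V jk.1 * V jk.2)
            = (-1 : DeltaHalf) ^ jk.2 * Ideal.Quotient.mk Ihalf (qgen jk.1)
                * Ideal.Quotient.mk Ihalf (qgen jk.2) := by
        intro jk hjk
        simp only [Finset.mem_filter, Finset.HasAntidiagonal.mem_antidiagonal] at hjk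
        rw [map_mul, map_mul, map_pow, map_neg, map_one,
          ih jk.1 (by omega) (by omega), ih jk.2 (by omega) (by omega)]
      rw [Finset.sum_congr rfl hsum]
      set S := ∑ jk ∈ (Finset.HasAntidiagonal.antidiagonal n).filter (fun jk => 0 < jk.1 ∧ 0 < jk.2),
          (-1 : DeltaHalf) ^ jk.2 * Ideal.Quotient.mk Ihalf (qgen jk.1)
            * Ideal.Quotient.mk Ihalf (qgen jk.2) with hS
      have hsplit := rsum_split (fun j => Ideal.Quotient.mk Ihalf (qgen j))
        (by simp [qgen]) hn
      have hpow : ((-1 : DeltaHalf)) ^ n = 1 := by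
        obtain ⟨t, ht⟩ := he
        subst ht
        rw [← two_mul, pow_mul]
        norm_num
      rw [rel_zero_in_quotient hn, hpow] at hsplit
      -- 0 = S + 2 * mk (qgen n)
      have hS2 : S = -(2 * Ideal.Quotient.mk Ihalf (qgen n)) := by
        rw [hS]
        have := hsplit.symm
        rw [show ((1 : DeltaHalf) + 1) = 2 by norm_num] at this
        linear_combination this
      have hC : Fmap (C (-half)) = algebraMap Zhalf DeltaHalf (-half) := by
        rw [Fmap, aeval_C]
      rw [hC, hS2]
      have h2half : (2 : DeltaHalf) * algebraMap Zhalf DeltaHalf half = 1 := by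
        have h2 : (2 : DeltaHalf) = algebraMap Zhalf DeltaHalf 2 :=
          (map_ofNat (algebraMap Zhalf DeltaHalf) 2).symm
        rw [h2, ← map_mul, two_mul_half, map_one]
      calc algebraMap Zhalf DeltaHalf (-half) * -(2 * Ideal.Quotient.mk Ihalf (qgen n))
          = ((2 : DeltaHalf) * algebraMap Zhalf DeltaHalf half)
              * Ideal.Quotient.mk Ihalf (qgen n) := by
            rw [map_neg]; ring
        _ = Ideal.Quotient.mk Ihalf (qgen n) := by rw [h2half, one_mul]
    · obtain ⟨k, rfl⟩ := ho
      rw [V_odd, Fmap, aeval_X]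

/-- Over ℤ[1/2], the quotient `Δ` is a polynomial algebra on the images of the
odd-indexed generators: the algebra map `ℤ[1/2][x_0, x_1, …] → Δ` sending
`x_k ↦ q_{2k+1}` is an isomorphism. -/
theorem deltaHalf_polynomial_on_odd_generators :
    Function.Bijective
      (MvPolynomial.aeval
        (fun k : ℕ => Ideal.Quotient.mk Ihalf (qgen (2 * k + 1))) :
        MvPolynomial ℕ Zhalf →ₐ[Zhalf] DeltaHalf) := by
  have hF : (MvPolynomial.aeval
      (fun k : ℕ => Ideal.Quotient.mk Ihalf (qgen (2 * k + 1))) :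
      MvPolynomial ℕ Zhalf →ₐ[Zhalf] DeltaHalf) = Fmap := rfl
  rw [hF]
  have hleft : psi.comp Fmap = AlgHom.id Zhalf (MvPolynomial ℕ Zhalf) := by
    apply MvPolynomial.algHom_ext
    intro k
    simp only [AlgHom.comp_apply, AlgHom.id_apply]
    rw [Fmap, aeval_X, psi_mk, phi_qgen, V_odd]
  have hright : Fmap.comp psi = AlgHom.id Zhalf DeltaHalf := by
    apply Ideal.Quotient.algHom_ext
    apply MvPolynomial.algHom_ext
    intro p
    simp only [AlgHom.comp_apply, AlgHom.id_apply, Ideal.Quotient.mkₐ_eq_mk]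
    rw [psi_mk]
    have : phi (X p) = V p := by rw [phi, aeval_X]
    rw [this, Fmap_V (show 1 ≤ (p : ℕ) from p.2), qgen_coe]
  constructor
  · intro a b hab
    have := congrArg psi hab
    calc a = psi (Fmap a) := by rw [← AlgHom.comp_apply, hleft]; rfl
    _ = psi (Fmap b) := this
    _ = b := by rw [← AlgHom.comp_apply, hleft]; rfl
  · intro y
    exact ⟨psi y, by rw [← AlgHom.comp_apply, hright]; rfl⟩

end
end

section
/- In the algebra Δ (the quotient of ℤ[q_1, q_2, …] by the coefficients of q(T)q(−T)=1), every monomial in the generators q_i is an integer linear combination of square-free monomials (monomials in which each q_i appears with exponent at most one). -/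
open MvPolynomial

noncomputable section

/-- The polynomial ring `ℤ[q_1, q_2, …]`, with variables indexed by `ℕ+`. -/
abbrev PZ := MvPolynomial ℕ+ ℤ

/-- `q_n` for `n ≥ 1` is the variable `X n`; `q_0 = 1`. -/
def qgenZ (n : ℕ) : PZ := if h : 0 < n then X (⟨n, h⟩ : ℕ+) else 1

/-- The ideal generated by the coefficients `r_n = ∑_{j+k=n} (-1)^k q_j q_k`
(`n ≥ 1`, `q_0 = 1`) of the relation `q(T)q(-T) = 1`. -/
def IZ : Ideal PZ :=
  Ideal.span { r | ∃ n : ℕ, 1 ≤ n ∧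
    r = ∑ jk ∈ Finset.HasAntidiagonal.antidiagonal n, (-1 : PZ) ^ jk.2 * qgenZ jk.1 * qgenZ jk.2 }

/-- Schur's algebra `Δ = ℤ[q_1, q_2, …]/I`. -/
abbrev DeltaZ := PZ ⧸ IZ

namespace SFaux

/-- The span of square-free monomials. -/
def SF : Submodule ℤ DeltaZ :=
  Submodule.span ℤ
    { m : DeltaZ | ∃ s : Finset ℕ+,
        m = Ideal.Quotient.mk IZ (∏ i ∈ s, X i) }

/-- Pad a natural number into a multiset of positive naturals (empty if zero). -/
def pad (t : ℕ) : Multiset ℕ+ := if h : 0 < t then {(⟨t, h⟩ : ℕ+)} else 0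

def sm (m : Multiset ℕ+) : ℕ := (m.map (fun i => (i : ℕ))).sum
def sq (m : Multiset ℕ+) : ℕ := (m.map (fun i => (i : ℕ) ^ 2)).sum
def μ (m : Multiset ℕ+) : ℕ := sm m ^ 2 - sq m

lemma pad_prod (t : ℕ) : ((pad t).map (X : ℕ+ → PZ)).prod = qgenZ t := by
  unfold pad qgenZ; split
  · exact (congrArg Multiset.prod (Multiset.map_singleton _ _)).trans (Multiset.prod_singleton _)
  · simp

lemma sm_pad (t : ℕ) : sm (pad t) = t := by
  unfold pad sm
  split
  · rfl
  · rename_i h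
    have ht : t = 0 := by omega
    subst ht
    rfl

lemma sq_pad (t : ℕ) : sq (pad t) = t ^ 2 := by
  unfold pad sq
  split
  · rfl
  · rename_i h
    have ht : t = 0 := by omega
    subst ht
    rfl

lemma sm_add (m₁ m₂ : Multiset ℕ+) : sm (m₁ + m₂) = sm m₁ + sm m₂ := by
  simp [sm]

lemma sq_add (m₁ m₂ : Multiset ℕ+) : sq (m₁ + m₂) = sq m₁ + sq m₂ := by
  simp [sq]

lemma sm_cons (a : ℕ+) (m : Multiset ℕ+) : sm (a ::ₘ m) = (a : ℕ) + sm m := by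
  simp [sm]

lemma sq_cons (a : ℕ+) (m : Multiset ℕ+) : sq (a ::ₘ m) = (a : ℕ) ^ 2 + sq m := by
  simp [sq]

lemma sq_le_sm_sq (m : Multiset ℕ+) : sq m ≤ sm m ^ 2 := by
  induction m using Multiset.induction with
  | empty => simp [sq, sm]
  | cons a m ih =>
    rw [sq_cons, sm_cons]
    have hx : ((a : ℕ) + sm m) ^ 2 = (a:ℕ)^2 + 2*((a:ℕ)*sm m) + sm m ^2 := by ring
    have := Nat.zero_le ((a:ℕ) * sm m)
    linarith

lemma sq_lt_of_dup (a : ℕ+) (r : Multiset ℕ+) :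
    sq (a ::ₘ a ::ₘ r) < sm (a ::ₘ a ::ₘ r) ^ 2 := by
  have h := sq_le_sm_sq r
  have ha : 1 ≤ (a : ℕ) := a.pos
  rw [sq_cons, sq_cons, sm_cons, sm_cons]
  have hx : ((a:ℕ) + ((a:ℕ) + sm r)) ^ 2
      = 4*((a:ℕ)^2) + 4*((a:ℕ)*sm r) + sm r ^ 2 := by ring
  have h1 : 1 ≤ (a:ℕ)^2 := Nat.one_le_pow _ _ a.pos
  have := Nat.zero_le ((a:ℕ) * sm r)
  linarith

lemma two_sq_lt {j k n : ℕ} (hjk : j + k = 2 * n) (hj : j ≠ n) :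
    2 * n ^ 2 < j ^ 2 + k ^ 2 := by
  zify
  have h1 : (j : ℤ) + k = 2 * n := by exact_mod_cast hjk
  have h2 : (j : ℤ) ≠ n := by exact_mod_cast hj
  have h3 : (1 : ℤ) ≤ |(j : ℤ) - n| := Int.one_le_abs (sub_ne_zero.mpr h2)
  have h4 : (1 : ℤ) ≤ ((j : ℤ) - n) ^ 2 := by
    calc (1 : ℤ) = 1 ^ 2 := by ring
    _ ≤ |(j : ℤ) - n| ^ 2 := by
        exact pow_le_pow_left₀ (by norm_num) h3 2
    _ = ((j : ℤ) - n) ^ 2 := sq_abs _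
  nlinarith

lemma neg_one_pow_smul (e : ℕ) (x : DeltaZ) :
    ((-1 : DeltaZ) ^ e) * x = ((-1 : ℤ) ^ e) • x := by
  rw [zsmul_eq_mul]
  push_cast
  ring

lemma qgen_coe (a : ℕ+) : qgenZ (a : ℕ) = X a := by
  unfold qgenZ
  rw [dif_pos a.pos]
  exact congrArg X (Subtype.ext rfl)

/-- Every monomial (as a multiset product) lies in the span of square-free monomials. -/
lemma mem_SF : ∀ (N : ℕ) (m : Multiset ℕ+), μ m ≤ N →
    Ideal.Quotient.mk IZ ((m.map (X : ℕ+ → PZ)).prod) ∈ SF := by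
  intro N
  induction N using Nat.strong_induction_on with
  | _ N ih =>
    intro m hm
    by_cases hnd : m.Nodup
    · refine Submodule.subset_span ⟨m.toFinset, ?_⟩
      congr 1
      rw [Finset.prod]
      congr 1
      rw [Multiset.toFinset_val, Multiset.dedup_eq_self.mpr hnd]
    · -- extract a duplicate
      rw [Multiset.nodup_iff_count_le_one] at hnd
      push_neg at hnd
      obtain ⟨a, ha⟩ := hnd
      have h2 : 2 ≤ m.count a := ha
      have hle : Multiset.replicate 2 a ≤ m := Multiset.le_count_iff_replicate_le.mp h2
      obtain ⟨r, hr⟩ := Multiset.le_iff_exists_add.mp hle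
      have hm' : m = a ::ₘ a ::ₘ r := by
        rw [hr]; simp [Multiset.replicate_succ]
      clear hr hle h2 ha
      subst hm'
      set Pr : PZ := (r.map (X : ℕ+ → PZ)).prod with hPr
      -- the relation r_{2a}
      have h2a : (1 : ℕ) ≤ 2 * (a : ℕ) := by have := a.pos; omega
      have hrel : (∑ jk ∈ Finset.HasAntidiagonal.antidiagonal (2 * (a : ℕ)),
          (-1 : PZ) ^ jk.2 * qgenZ jk.1 * qgenZ jk.2) ∈ IZ :=
        Ideal.subset_span ⟨2 * (a : ℕ), h2a, rfl⟩
      have h0 : Ideal.Quotient.mk IZ ((∑ jk ∈ Finset.HasAntidiagonal.antidiagonal (2 * (a : ℕ)),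
          (-1 : PZ) ^ jk.2 * qgenZ jk.1 * qgenZ jk.2) * Pr) = 0 :=
        Ideal.Quotient.eq_zero_iff_mem.mpr (Ideal.mul_mem_right _ _ hrel)
      have hmem : ((a : ℕ), (a : ℕ)) ∈ Finset.HasAntidiagonal.antidiagonal (2 * (a : ℕ)) := by
        rw [Finset.HasAntidiagonal.mem_antidiagonal]; omega
      rw [← Finset.add_sum_erase _ _ hmem] at h0
      set E := (Finset.HasAntidiagonal.antidiagonal (2 * (a : ℕ))).erase ((a : ℕ), (a : ℕ)) with hE
      rw [add_mul, Finset.sum_mul, map_add, map_sum] at h0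
      -- rewrite the lead term
      have hlead : ((-1 : PZ) ^ (a : ℕ) * qgenZ (a : ℕ) * qgenZ (a : ℕ)) * Pr
          = (-1 : PZ) ^ (a : ℕ) * (X a * (X a * Pr)) := by
        rw [qgen_coe]; ring
      rw [hlead] at h0
      have e1 : ((-1 : DeltaZ) ^ (a : ℕ)) * Ideal.Quotient.mk IZ (X a * (X a * Pr))
          = - ∑ jk ∈ E, Ideal.Quotient.mk IZ
              (((-1 : PZ) ^ jk.2 * qgenZ jk.1 * qgenZ jk.2) * Pr) := by
        have := h0
        rw [map_mul, map_pow, map_neg, map_one] at this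
        linear_combination this
      have h1 : ((-1 : DeltaZ) ^ (a : ℕ)) * ((-1 : DeltaZ) ^ (a : ℕ)) = 1 := by
        rw [← pow_add, show (a:ℕ) + (a:ℕ) = 2 * (a:ℕ) by ring, pow_mul]
        norm_num
      have e2 : Ideal.Quotient.mk IZ (X a * (X a * Pr))
          = ((-1 : DeltaZ) ^ (a : ℕ)) *
            (- ∑ jk ∈ E, Ideal.Quotient.mk IZ
              (((-1 : PZ) ^ jk.2 * qgenZ jk.1 * qgenZ jk.2) * Pr)) := by
        linear_combination ((-1 : DeltaZ) ^ (a : ℕ)) * e1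
          - (Ideal.Quotient.mk IZ (X a * (X a * Pr))) * h1
      have hgoal : ((a ::ₘ a ::ₘ r).map (X : ℕ+ → PZ)).prod = X a * (X a * Pr) := by
        simp [hPr]
      rw [hgoal, e2, neg_one_pow_smul]
      refine Submodule.smul_mem _ _ (Submodule.neg_mem _ (Submodule.sum_mem _ ?_))
      intro jk hjk
      obtain ⟨hne, hanti⟩ := Finset.mem_erase.mp hjk
      rw [Finset.HasAntidiagonal.mem_antidiagonal] at hanti
      have hj : jk.1 ≠ (a : ℕ) := by
        intro h
        apply hne
        have : jk.2 = (a : ℕ) := by omega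
        exact Prod.ext h this
      -- the replacement multiset
      set m' : Multiset ℕ+ := pad jk.1 + pad jk.2 + r with hm'
      have hprod : ((-1 : PZ) ^ jk.2 * qgenZ jk.1 * qgenZ jk.2) * Pr
          = (-1 : PZ) ^ jk.2 * ((m'.map (X : ℕ+ → PZ)).prod) := by
        rw [hm']
        simp only [Multiset.map_add, Multiset.prod_add, pad_prod]
        ring
      rw [hprod, map_mul, map_pow, map_neg, map_one, neg_one_pow_smul]
      refine Submodule.smul_mem _ _ ?_
      -- strict decrease of μ
      have hsm : sm m' = sm (a ::ₘ a ::ₘ r) := by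
        rw [hm', sm_add, sm_add, sm_pad, sm_pad, sm_cons, sm_cons]
        omega
      have hsq : sq (a ::ₘ a ::ₘ r) < sq m' := by
        rw [hm', sq_add, sq_add, sq_pad, sq_pad, sq_cons, sq_cons]
        have := two_sq_lt hanti hj
        omega
      have hμ : μ m' < μ (a ::ₘ a ::ₘ r) := by
        unfold μ
        rw [hsm]
        exact Nat.sub_lt_sub_left (sq_lt_of_dup a r) hsq
      exact ih (μ m') (lt_of_lt_of_le hμ hm) m' le_rfl

lemma SF_eq_top : SF = ⊤ := by
  rw [eq_top_iff]
  rintro x -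
  obtain ⟨p, rfl⟩ := Ideal.Quotient.mk_surjective x
  -- span of all multiset monomials
  have key : ∀ q : PZ, Ideal.Quotient.mk IZ q ∈
      Submodule.span ℤ { y : DeltaZ | ∃ m : Multiset ℕ+,
        y = Ideal.Quotient.mk IZ ((m.map (X : ℕ+ → PZ)).prod) } := by
    intro q
    induction q using MvPolynomial.induction_on with
    | C a =>
      have h1 : (Ideal.Quotient.mk IZ (1 : PZ)) ∈
          Submodule.span ℤ { y : DeltaZ | ∃ m : Multiset ℕ+,
            y = Ideal.Quotient.mk IZ ((m.map (X : ℕ+ → PZ)).prod) } :=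
        Submodule.subset_span ⟨0, by simp⟩
      have h2 : Ideal.Quotient.mk IZ (C a : PZ) = a • Ideal.Quotient.mk IZ (1 : PZ) := by
        rw [map_one, zsmul_eq_mul, mul_one, ← map_intCast (Ideal.Quotient.mk IZ) a]
        exact congrArg _ (eq_intCast MvPolynomial.C a)
      rw [h2]
      exact Submodule.smul_mem _ _ h1
    | add p q hp hq => rw [map_add]; exact Submodule.add_mem _ hp hq
    | mul_X p i hp =>
      rw [map_mul]
      refine Submodule.span_induction
        (fun y hy => ?_) ?_ (fun y z _ _ hy hz => ?_) (fun c y _ hy => ?_) hp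
      · obtain ⟨m, rfl⟩ := hy
        refine Submodule.subset_span ⟨i ::ₘ m, ?_⟩
        rw [← map_mul]
        congr 1
        simp [mul_comm]
      · rw [zero_mul]; exact Submodule.zero_mem _
      · rw [add_mul]; exact Submodule.add_mem _ hy hz
      · rw [smul_mul_assoc]; exact Submodule.smul_mem _ _ hy
  refine Submodule.span_le.mpr ?_ (key p)
  rintro y ⟨m, rfl⟩
  exact mem_SF (μ m) m le_rfl

end SFaux

/-- In `Δ`, the square-free monomials (products `∏_{i ∈ s} q_i` over finite sets
of indices `≥ 1`) span everything over ℤ. -/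
theorem delta_spanned_by_squarefree_monomials :
    Submodule.span ℤ
      { m : DeltaZ | ∃ s : Finset ℕ+,
          m = Ideal.Quotient.mk IZ (∏ i ∈ s, X i) } = ⊤ := by
  exact SFaux.SF_eq_top

end
end

section
/- With x_k as above, the elements 2 x_k are integral, i.e. lie in the image of Δ in Δ ⊗ ℚ; in particular 2 x_0 = q_1 and 2 x_1 = 3 q_3 − q_1 q_2. -/
open MvPolynomial PowerSeries

noncomputable section

/-- The polynomial ring `ℚ[q_1, q_2, …]`, with variables indexed by `ℕ+`. -/
abbrev PQ := MvPolynomial ℕ+ ℚ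

/-- `q_n` for `n ≥ 1` is the variable `X n`; `q_0 = 1`. -/
def qgenQ (n : ℕ) : PQ := if h : 0 < n then X (⟨n, h⟩ : ℕ+) else 1

/-- The ideal generated by the coefficients `r_n = ∑_{j+k=n} (-1)^k q_j q_k`
(`n ≥ 1`, `q_0 = 1`) of the relation `q(T)q(-T) = 1`. -/
def IQ : Ideal PQ :=
  Ideal.span { r | ∃ n : ℕ, 1 ≤ n ∧
    r = ∑ jk ∈ Finset.HasAntidiagonal.antidiagonal n, (-1 : PQ) ^ jk.2 * qgenQ jk.1 * qgenQ jk.2 }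

/-- `Δ_ℚ = ℚ[q_1, q_2, …]/I`. -/
abbrev DeltaQ := PQ ⧸ IQ

/-- The image of `q_n` in `Δ_ℚ`. -/
def qbar (n : ℕ) : DeltaQ := Ideal.Quotient.mk IQ (qgenQ n)

/-- The generating series `q(T) = ∑ q_n T^n` over `Δ_ℚ`. -/
def Qser : PowerSeries DeltaQ := PowerSeries.mk qbar

lemma qbar_zero : qbar 0 = 1 := by simp [qbar, qgenQ]

lemma rel2 : qbar 1 * qbar 1 = 2 * qbar 2 := by
  have hmem : (∑ jk ∈ Finset.HasAntidiagonal.antidiagonal 2, (-1 : PQ) ^ jk.2 * qgenQ jk.1 * qgenQ jk.2) ∈ IQ :=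
    Ideal.subset_span ⟨2, by norm_num, rfl⟩
  have h0 := (Ideal.Quotient.eq_zero_iff_mem).2 hmem
  have hs : (∑ jk ∈ Finset.HasAntidiagonal.antidiagonal 2, (-1 : PQ) ^ jk.2 * qgenQ jk.1 * qgenQ jk.2)
      = 2 * qgenQ 2 - qgenQ 1 * qgenQ 1 := by
    rw [show (2:ℕ) = 1 + 1 from rfl, Finset.Nat.sum_antidiagonal_eq_sum_range_succ_mk]
    simp [Finset.sum_range_succ, qgenQ]
    ring
  rw [hs] at h0
  simp only [map_sub, map_mul, map_ofNat] at h0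
  have : (2 : DeltaQ) * qbar 2 - qbar 1 * qbar 1 = 0 := by
    simpa [qbar] using h0
  linear_combination -this

/-- Integrality of `2x_k`: with `x_k` defined by `log q(T) = ∑ (2x_k/(2k+1)) T^{2k+1}`
(here `log q` is characterized by constant term 0 and `q·(log q)' = q'`), one has
`2x_0 = q_1` and `2x_1 = 3q_3 - q_1 q_2` in `Δ_ℚ`; in particular `2x_0` and `2x_1`
lie in the image of `Δ`. -/
theorem two_x_integral
    (a : ℕ → DeltaQ) (ha0 : a 0 = 0)
    (hlog : Qser * derivativeFun (PowerSeries.mk a) = derivativeFun Qser)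
    (x : ℕ → DeltaQ) (hx : ∀ k : ℕ, x k = ((2 * k + 1 : ℚ) / 2) • a (2 * k + 1)) :
    (2 : ℚ) • x 0 = qbar 1 ∧
      (2 : ℚ) • x 1 = (3 : ℚ) • qbar 3 - qbar 1 * qbar 2 := by
  have key : ∀ n : ℕ, ∑ p ∈ Finset.HasAntidiagonal.antidiagonal n, qbar p.1 * (a (p.2+1) * (p.2+1))
      = qbar (n+1) * (n+1) := by
    intro n
    have h := congrArg (PowerSeries.coeff (R := DeltaQ) n) hlog
    simp only [Qser, PowerSeries.coeff_mul, show ∀ f : PowerSeries DeltaQ, derivativeFun f = PowerSeries.derivative DeltaQ f from fun _ => rfl, PowerSeries.coeff_derivative, coeff_mk] at h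
    convert h using 2
  have k0 := key 0
  have k1 := key 1
  have k2 := key 2
  rw [Finset.Nat.sum_antidiagonal_eq_sum_range_succ_mk] at k0 k1 k2
  simp only [Finset.sum_range_succ, Finset.sum_range_zero, qbar_zero] at k0 k1 k2
  push_cast at k0 k1 k2
  set c : DeltaQ := algebraMap ℚ DeltaQ (1/2) with hcdef
  have hc : (2 : DeltaQ) * c = 1 := by
    rw [hcdef, ← map_ofNat (algebraMap ℚ DeltaQ) 2, ← map_mul]
    norm_num
  have ha1 : a 1 = qbar 1 := by linear_combination k0
  have ha2 : (2:DeltaQ) * a 2 = 2 * qbar 2 - qbar 1 * qbar 1 := by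
    linear_combination k1 - qbar 1 * ha1
  have h6 : (6:DeltaQ) * a 3 = 6 * qbar 3 - 2 * (qbar 1 * qbar 2) := by
    linear_combination 2 * k2 - 2 * qbar 2 * ha1 - 2 * qbar 1 * ha2 + 2 * qbar 1 * rel2
  have ha3 : (3:DeltaQ) * a 3 = 3 * qbar 3 - qbar 1 * qbar 2 := by
    linear_combination c * h6 - (3 * a 3 - 3 * qbar 3 + qbar 1 * qbar 2) * hc
  have hsm : ∀ (r : ℚ) (y : DeltaQ), r • y = algebraMap ℚ DeltaQ r * y := fun r y =>
    (Algebra.smul_def r y)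
  constructor
  · rw [hx]; push_cast; rw [smul_smul]
    norm_num
    simpa using ha1
  · rw [hx]; push_cast; rw [smul_smul]
    norm_num
    rw [hsm, hsm, map_ofNat (algebraMap ℚ DeltaQ) 3]
    linear_combination ha3

end
end

section
/- Over a ℚ-algebra, a series h ∈ W₀(A) satisfies ∏_{k=0}^{p−1} h(ω^k T) = 1 (ω a primitive p-th root of unity in A) if and only if its power sums p_n(h) vanish for all n divisible by p. -/
open PowerSeries

/-- `IsGhostPair h p` : `h` has constant term 1 and `p n` (`n ≥ 1`) are its power
sums (ghost components), i.e. `log h(T) = ∑_{n≥1} (-1)^{n-1} p_n T^n / n`,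
expressed via the logarithmic derivative:
`T·h'(T) = h(T) · ∑_{n≥1} (-1)^{n-1} p_n T^n`. -/
def IsGhostPair {A : Type*} [CommRing A] (h : PowerSeries A) (p : ℕ → A) : Prop :=
  constantCoeff h = 1 ∧
    PowerSeries.X * derivativeFun h =
      h * PowerSeries.mk (fun n => if n = 0 then 0 else (-1 : A) ^ (n - 1) * p n)

private lemma logderiv_rescale {A : Type*} [CommRing A] (a : A) (f : PowerSeries A) :
    PowerSeries.X * derivativeFun (rescale a f) =
      rescale a (PowerSeries.X * derivativeFun f) := by
  ext n
  cases n with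
  | zero =>
    simp [coeff_rescale, PowerSeries.coeff_zero_eq_constantCoeff, map_mul]
  | succ n =>
    rw [PowerSeries.coeff_succ_X_mul, coeff_rescale, PowerSeries.coeff_succ_X_mul]
    show coeff n (d⁄dX A (rescale a f)) = a ^ (n + 1) * coeff n (d⁄dX A f)
    rw [coeff_derivative, coeff_rescale, coeff_derivative]
    ring

private lemma logderiv_prod {A : Type*} [CommRing A] {ι : Type*} (s : Finset ι)
    (f P : ι → PowerSeries A)
    (hf : ∀ k ∈ s, PowerSeries.X * derivativeFun (f k) = f k * P k) :
    PowerSeries.X * derivativeFun (∏ k ∈ s, f k) =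
      (∏ k ∈ s, f k) * ∑ k ∈ s, P k := by
  classical
  induction s using Finset.induction with
  | empty => simp [derivativeFun_one]
  | @insert a s hns ih =>
    have h1 := ih (fun k hk => hf k (Finset.mem_insert_of_mem hk))
    have h2 := hf a (Finset.mem_insert_self a s)
    rw [Finset.prod_insert hns, Finset.sum_insert hns, derivativeFun_mul]
    simp only [smul_eq_mul]
    linear_combination f a * h1 + (∏ x ∈ s, f x) * h2

/-- Over a ℚ-algebra `A` containing a primitive `p`-th root of unity `ω` (`p` prime),
a series `h ∈ W₀(A)` satisfies `∏_{k=0}^{p-1} h(ω^k T) = 1` if and only if its power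
sums `p_n(h)` vanish for all `n ≥ 1` divisible by `p`. -/
theorem root_of_unity_relation_iff_power_sums_vanish
    (A : Type*) [CommRing A] [Algebra ℚ A] (p : ℕ) (hp : p.Prime)
    (ω : A) (hω : ω ^ p = 1)
    (hprim : ∀ j : ℕ, 1 ≤ j → j ≤ p - 1 → ∑ k ∈ Finset.range p, ω ^ (j * k) = 0)
    (h : PowerSeries A) (ps : ℕ → A) (hgh : IsGhostPair h ps) :
    (∏ k ∈ Finset.range p, PowerSeries.rescale (ω ^ k) h = 1) ↔
      (∀ n : ℕ, 1 ≤ n → p ∣ n → ps n = 0) := by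
  obtain ⟨hc, hld⟩ := hgh
  have : IsAddTorsionFree A := .of_module_rat _
  set P : PowerSeries A :=
    PowerSeries.mk (fun n => if n = 0 then 0 else (-1 : A) ^ (n - 1) * ps n) with hP
  set g : PowerSeries A := ∏ k ∈ Finset.range p, PowerSeries.rescale (ω ^ k) h with hgdef
  set S : PowerSeries A := ∑ k ∈ Finset.range p, PowerSeries.rescale (ω ^ k) P with hSdef
  have key : PowerSeries.X * derivativeFun g = g * S := by
    refine logderiv_prod _ _ _ (fun k _ => ?_)
    rw [logderiv_rescale, hld, map_mul]
  have hcoeffS : ∀ n : ℕ, coeff n S =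
      (∑ k ∈ Finset.range p, (ω ^ n) ^ k) *
        (if n = 0 then 0 else (-1 : A) ^ (n - 1) * ps n) := by
    intro n
    rw [hSdef, map_sum, Finset.sum_mul]
    refine Finset.sum_congr rfl (fun k _ => ?_)
    rw [coeff_rescale, hP, coeff_mk, ← pow_mul, ← pow_mul, mul_comm k n]
  have hωn : ∀ n : ℕ, p ∣ n → (ω : A) ^ n = 1 := by
    intro n ⟨c, hcn⟩
    rw [hcn, pow_mul, hω, one_pow]
  constructor
  · intro hg1 n hn1 hpn
    have hS0 : S = 0 := by
      have := key
      rw [hg1, derivativeFun_one, mul_zero, one_mul] at this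
      exact this.symm
    have := hcoeffS n
    rw [hS0, map_zero, if_neg (by omega), hωn n hpn] at this
    simp only [one_pow, Finset.sum_const, Finset.card_range, nsmul_eq_mul] at this
    have h2 : (p : A) * ((-1 : A) ^ (n - 1) * ps n) = 0 := by linear_combination -this
    have h3 : ((-1 : A) ^ (n - 1) * ps n) = 0 := by
      have : (p : ℕ) • ((-1 : A) ^ (n - 1) * ps n) = 0 := by
        rw [nsmul_eq_mul]; exact h2
      rcases smul_eq_zero.mp this with hh | hh
      · exact absurd hh hp.ne_zero
      · exact hh
    have h4 : ((-1 : A) ^ (n - 1)) * ((-1 : A) ^ (n - 1) * ps n) = ps n := by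
      rw [← mul_assoc, ← pow_add, ← two_mul, pow_mul, neg_one_sq, one_pow, one_mul]
    rw [← h4, h3, mul_zero]
  · intro hps
    have hS0 : S = 0 := by
      ext n
      rw [hcoeffS n, map_zero]
      rcases Nat.eq_zero_or_pos n with hn | hn
      · simp [hn]
      · by_cases hpn : p ∣ n
        · rw [if_neg (by omega), hps n hn hpn, mul_zero, mul_zero]
        · have hr1 : 1 ≤ n % p := by
            rcases Nat.eq_zero_or_pos (n % p) with h0 | h0
            · exact absurd (Nat.dvd_of_mod_eq_zero h0) hpn
            · exact h0
          have hr2 : n % p ≤ p - 1 := by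
            have := Nat.mod_lt n hp.pos
            omega
          have hsum : ∑ k ∈ Finset.range p, (ω ^ n) ^ k = 0 := by
            have hωnr : (ω : A) ^ n = ω ^ (n % p) := by
              conv_lhs => rw [← Nat.div_add_mod n p]
              rw [pow_add, pow_mul, hω, one_pow, one_mul]
            rw [hωnr]
            have := hprim (n % p) hr1 hr2
            simpa [pow_mul] using this
          rw [hsum, zero_mul]
    have hderiv : derivativeFun g = 0 := by
      ext n
      have : coeff (n + 1) (PowerSeries.X * derivativeFun g) = 0 := by
        rw [key, hS0, mul_zero, map_zero]
      rwa [PowerSeries.coeff_succ_X_mul] at this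
    have hcg : constantCoeff g = 1 := by
      rw [hgdef, map_prod]
      refine Finset.prod_eq_one (fun k _ => ?_)
      have : constantCoeff (rescale (ω ^ k) h) = coeff 0 (rescale (ω ^ k) h) := by
        rw [PowerSeries.coeff_zero_eq_constantCoeff]
      rw [this, coeff_rescale, pow_zero, one_mul, PowerSeries.coeff_zero_eq_constantCoeff, hc]
    have : g = 1 := by
      refine PowerSeries.derivative.ext ?_ ?_
      · show derivativeFun g = derivativeFun 1
        rw [hderiv, derivativeFun_one]
      · rw [hcg, map_one]
    exact this
end

section
/- The entire function ε(z) = ∑_{n≥0} (−z)^n / (2n+1)!! is strictly monotone decreasing on ℝ and gives a bijection ε : ℝ → (0, ∞), with ε(0) = 1. -/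
open Nat Filter

/-- The entire function `ε(x) = ∑_{n≥0} (-x)^n / (2n+1)!!`. -/
noncomputable def epsKW (x : ℝ) : ℝ := ∑' n : ℕ, (-x) ^ n / ((2 * n + 1)‼ : ℝ)

section epsAux
open Finset intervalIntegral MeasureTheory

lemma sum_choose_inv (n : ℕ) : ∀ x : ℝ, 0 < x →
    ∑ k ∈ Finset.range (n+1), (-1:ℝ)^k * (n.choose k) / (x + k)
      = (n ! : ℝ) / ∏ k ∈ Finset.range (n+1), (x + k) := by
  induction n with
  | zero => intro x hx; simp
  | succ n ih =>
    intro x hx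
    have hprod : ∀ y : ℝ, 0 < y → (0:ℝ) < ∏ k ∈ Finset.range (n+1), (y + k) := by
      intro y hy
      exact Finset.prod_pos fun k _ => by positivity
    have key : ∑ k ∈ Finset.range (n+2), (-1:ℝ)^k * ((n+1).choose k) / (x + k)
        = (∑ k ∈ Finset.range (n+1), (-1:ℝ)^k * (n.choose k) / (x + k))
          - ∑ k ∈ Finset.range (n+1), (-1:ℝ)^k * (n.choose k) / ((x+1) + k) := by
      rw [Finset.sum_range_succ' (fun k => (-1:ℝ)^k * ((n+1).choose k) / (x + k)) (n+1)]
      have h1 : ∀ k, (((n+1).choose (k+1) : ℝ)) = (n.choose k : ℝ) + (n.choose (k+1) : ℝ) := by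
        intro k; rw [Nat.choose_succ_succ]; push_cast; ring
      have h2 : ∑ k ∈ Finset.range (n+1), (-1:ℝ)^(k+1) * ((n+1).choose (k+1)) / (x + ((k:ℝ)+1))
          = -(∑ k ∈ Finset.range (n+1), (-1:ℝ)^k * (n.choose k) / ((x+1) + k))
            - ∑ k ∈ Finset.range (n+1), (-1:ℝ)^k * (n.choose (k+1)) / (x + ((k:ℝ)+1)) := by
        rw [← Finset.sum_neg_distrib, ← Finset.sum_sub_distrib]
        apply Finset.sum_congr rfl
        intro k _
        rw [h1]
        push_cast
        ring_nf
      have h3 : ∑ k ∈ Finset.range (n+1), (-1:ℝ)^k * (n.choose (k+1)) / (x + ((k:ℝ)+1))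
          = -((∑ k ∈ Finset.range (n+1), (-1:ℝ)^k * (n.choose k) / (x + k)) - 1/x) := by
        rw [Finset.sum_range_succ' (fun k => (-1:ℝ)^k * (n.choose k) / (x + k)) n]
        rw [Finset.sum_range_succ (fun k => (-1:ℝ)^k * (n.choose (k+1)) / (x + ((k:ℝ)+1))) n]
        have e : ∀ k ∈ Finset.range n, (-1:ℝ)^(k+1) * (n.choose (k+1)) / (x + ((k:ℝ)+1))
            = -((-1:ℝ)^k * (n.choose (k+1)) / (x + ((k:ℝ)+1))) := by
          intro k _; ring
        push_cast
        rw [Finset.sum_congr rfl e, Finset.sum_neg_distrib]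
        simp [Nat.choose_succ_self]
      push_cast at h2 h3 ⊢
      rw [h2, h3]
      simp only [Nat.choose_zero_right]
      push_cast
      ring
    rw [key, ih x hx, ih (x+1) (by positivity)]
    have hP1 : ∏ k ∈ Finset.range (n+2), (x + (k:ℝ)) = (∏ k ∈ Finset.range (n+1), (x + (k:ℝ))) * (x + ((n:ℝ)+1)) := by
      rw [Finset.prod_range_succ]; push_cast; ring
    have hP2 : ∏ k ∈ Finset.range (n+2), (x + (k:ℝ)) = x * ∏ k ∈ Finset.range (n+1), ((x+1) + k) := by
      rw [Finset.prod_range_succ' (fun k => x + (k:ℝ)) (n+1)]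
      push_cast
      rw [add_zero, mul_comm]
      congr 1
      exact Finset.prod_congr rfl fun k _ => by push_cast; ring
    have hA : (0:ℝ) < ∏ k ∈ Finset.range (n+1), (x + k) := hprod x hx
    have hB : (0:ℝ) < ∏ k ∈ Finset.range (n+1), ((x+1) + k) := hprod (x+1) (by positivity)
    have hx1 : (0:ℝ) < x + ((n:ℝ)+1) := by positivity
    rw [hP1, Nat.factorial_succ]
    push_cast
    have hBval : ∏ k ∈ Finset.range (n+1), ((x+1) + k) = (∏ k ∈ Finset.range (n+1), (x + k)) * (x + ((n:ℝ)+1)) / x := by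
      field_simp
      rw [← hP2, hP1]
    rw [hBval]
    field_simp
    ring


lemma dfac_prod (n : ℕ) : ((2*n+1)‼ : ℝ) = ∏ k ∈ Finset.range (n+1), (2*(k:ℝ)+1) := by
  induction n with
  | zero => simp
  | succ n ih =>
    have : 2*(n+1)+1 = (2*n+1)+2 := by ring
    rw [this, Nat.doubleFactorial_add_two, Finset.prod_range_succ, ← ih]
    push_cast
    ring

lemma dfac_pos (n : ℕ) : (0:ℝ) < ((2*n+1)‼ : ℝ) := by
  exact_mod_cast Nat.doubleFactorial_pos _

lemma fac_le_dfac (n : ℕ) : (n ! : ℝ) ≤ ((2*n+1)‼ : ℝ) := by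
  induction n with
  | zero => norm_num
  | succ n ih =>
    have h : 2*(n+1)+1 = (2*n+1)+2 := by ring
    rw [h, Nat.doubleFactorial_add_two, Nat.factorial_succ]
    push_cast
    have h1 : ((n:ℝ)+1) ≤ 2*(n:ℝ)+1+2 := by nlinarith [n.cast_nonneg (α := ℝ)]
    have h2 : (0:ℝ) ≤ (n ! : ℝ) := by positivity
    nlinarith [dfac_pos n, ih]

-- summability of the eps series (in abs value)
lemma eps_summable (x : ℝ) : Summable (fun n : ℕ => (-x)^n / ((2*n+1)‼ : ℝ)) := by
  apply Summable.of_norm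
  apply Summable.of_nonneg_of_le (fun n => norm_nonneg _)
    (fun n => ?_) (Real.summable_pow_div_factorial |x|)
  rw [norm_div, norm_pow, norm_neg, Real.norm_eq_abs, Real.norm_eq_abs,
    abs_of_pos (dfac_pos n)]
  apply div_le_div_of_nonneg_left ?_ ?_ (fac_le_dfac n) |>.trans_eq rfl
  · positivity
  · exact_mod_cast Nat.factorial_pos n


lemma wallis_sum (n : ℕ) :
    ∑ k ∈ Finset.range (n+1), (-1:ℝ)^k * (n.choose k) / (2*(k:ℝ)+1)
      = 2^n * (n ! : ℝ) / ((2*n+1)‼ : ℝ) := by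
  have h := sum_choose_inv n (1/2) (by norm_num)
  have e1 : ∀ k ∈ Finset.range (n+1), (-1:ℝ)^k * (n.choose k) / ((1:ℝ)/2 + k)
      = 2 * ((-1:ℝ)^k * (n.choose k) / (2*(k:ℝ)+1)) := by
    intro k _
    rw [div_eq_iff (by positivity)]
    field_simp
    ring
  rw [Finset.sum_congr rfl e1, ← Finset.mul_sum] at h
  have e2 : ∏ k ∈ Finset.range (n+1), ((1:ℝ)/2 + k)
      = ((2*n+1)‼ : ℝ) / 2^(n+1) := by
    rw [dfac_prod]
    have e3 : ∀ k ∈ Finset.range (n+1), (1:ℝ)/2 + k = (2*(k:ℝ)+1)/2 := fun k _ => by ring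
    rw [Finset.prod_congr rfl e3, Finset.prod_div_distrib, Finset.prod_const,
      Finset.card_range]
  rw [e2] at h
  have hd := dfac_pos n
  rw [div_div_eq_mul_div, eq_div_iff (by positivity)] at h
  rw [eq_div_iff (by positivity)]
  have hp : (2:ℝ)^(n+1) = 2^n * 2 := pow_succ 2 n
  nlinarith [h, hp]

lemma integral_one_sub_sq (n : ℕ) :
    ∫ s in (0:ℝ)..1, (1 - s^2)^n = 2^n * (n ! : ℝ) / ((2*n+1)‼ : ℝ) := by
  rw [← wallis_sum n]
  have expand : ∀ s : ℝ, (1 - s^2)^n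
      = ∑ k ∈ Finset.range (n+1), (-1:ℝ)^k * (n.choose k) * s^(2*k) := by
    intro s
    have : (1 - s^2) = (-(s^2)) + 1 := by ring
    rw [this, add_pow]
    apply Finset.sum_congr rfl
    intro k _
    rw [neg_pow, one_pow, pow_mul]
    ring
  simp_rw [expand]
  rw [intervalIntegral.integral_finset_sum]
  · apply Finset.sum_congr rfl
    intro k _
    have : ∀ s:ℝ, (-1:ℝ)^k * (n.choose k) * s^(2*k) = ((-1:ℝ)^k * (n.choose k)) * s^(2*k) :=
      fun s => by ring
    rw [intervalIntegral.integral_const_mul, integral_pow]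
    push_cast
    ring
  · intro k _
    exact (Continuous.intervalIntegrable (by continuity) _ _)

lemma integral_term (x : ℝ) (n : ℕ) :
    ∫ s in (0:ℝ)..1, (x * (s^2 - 1)/2)^n / (n ! : ℝ) = (-x)^n / ((2*n+1)‼ : ℝ) := by
  have e : ∀ s : ℝ, (x * (s^2 - 1)/2)^n / (n ! : ℝ)
      = (((-x)/2)^n / (n ! : ℝ)) * (1 - s^2)^n := by
    intro s
    rw [div_mul_eq_mul_div, ← mul_pow]
    congr 2
    ring
  simp_rw [e]
  rw [intervalIntegral.integral_const_mul, integral_one_sub_sq]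
  have hd := dfac_pos n
  have hf : (0:ℝ) < (n ! : ℝ) := by exact_mod_cast Nat.factorial_pos n
  have hp : ((-x)/2)^n = (-x)^n / 2^n := div_pow _ _ _
  rw [hp]
  field_simp


lemma exp_tsum (y : ℝ) : Real.exp y = ∑' n : ℕ, y ^ n / (n ! : ℝ) := by
  rw [Real.exp_eq_exp_ℝ, NormedSpace.exp_eq_tsum_div]

lemma epsKW_integral (x : ℝ) :
    epsKW x = ∫ s in (0:ℝ)..1, Real.exp (x * (s^2 - 1)/2) := by
  set F : ℕ → ℝ → ℝ := fun n s => (x * (s^2 - 1)/2)^n / (n ! : ℝ) with hF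
  have hcont : ∀ n, Continuous (F n) := by
    intro n; rw [hF]; fun_prop
  have hint : ∀ n, IntegrableOn (F n) (Set.Ioc (0:ℝ) 1) volume := fun n =>
    (hcont n).integrableOn_Ioc
  have hbound : ∀ n, ∀ s ∈ Set.Ioc (0:ℝ) 1, ‖F n s‖ ≤ (|x|/2)^n / (n ! : ℝ) := by
    intro n s hs
    rw [hF]
    simp only [norm_div, norm_pow, Real.norm_eq_abs, Nat.abs_cast]
    have h1 : |s^2 - 1| ≤ 1 := by
      rw [abs_le]
      constructor <;> nlinarith [hs.1, hs.2]
    have habs : |x * (s^2 - 1)| / |2| ≤ |x|/2 := by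
      rw [abs_mul, abs_of_pos (by norm_num : (0:ℝ) < 2)]
      calc |x| * |s^2-1| / 2 ≤ |x| * 1 / 2 := by gcongr
      _ = |x| / 2 := by ring
    rw [div_le_div_iff_of_pos_right (by exact_mod_cast Nat.factorial_pos n)]
    exact pow_le_pow_left₀ (by positivity) habs n
  have hsum : Summable (fun n => ∫ s in Set.Ioc (0:ℝ) 1, ‖F n s‖) := by
    apply Summable.of_nonneg_of_le
      (fun n => integral_nonneg fun s => norm_nonneg _) (fun n => ?_)
      (Real.summable_pow_div_factorial (|x|/2))
    calc ∫ s in Set.Ioc (0:ℝ) 1, ‖F n s‖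
        ≤ ∫ _ in Set.Ioc (0:ℝ) 1, ((|x|/2)^n / (n ! : ℝ)) := by
          apply setIntegral_mono_on (hint n).norm
            (integrableOn_const (by rw [Real.volume_Ioc]; norm_num))
            measurableSet_Ioc (hbound n)
      _ = (|x|/2)^n / (n ! : ℝ) := by
          rw [setIntegral_const, Real.volume_real_Ioc]
          norm_num
  have key := hasSum_integral_of_summable_integral_norm hint hsum
  have h1 : ∀ s : ℝ, ∑' n, F n s = Real.exp (x * (s^2 - 1)/2) := by
    intro s; rw [exp_tsum]
  have h2 : epsKW x = ∑' n, ∫ s in Set.Ioc (0:ℝ) 1, F n s := by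
    rw [epsKW]
    congr 1
    funext n
    rw [← integral_term x n, intervalIntegral.integral_of_le zero_le_one]
  rw [h2, key.tsum_eq, intervalIntegral.integral_of_le zero_le_one]
  congr 1
  funext s
  exact h1 s


lemma eps_zero : epsKW 0 = 1 := by
  rw [epsKW, tsum_eq_single 0 (fun n hn => ?_)]
  · norm_num
  · rw [neg_zero, zero_pow hn, zero_div]

lemma eps_pos (x : ℝ) : 0 < epsKW x := by
  rw [epsKW_integral]
  exact intervalIntegral.intervalIntegral_pos_of_pos
    ((Continuous.intervalIntegrable (by fun_prop) _ _)) (fun s => Real.exp_pos _) one_pos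

lemma eps_anti : StrictAnti epsKW := by
  intro a b hab
  rw [epsKW_integral a, epsKW_integral b]
  have inta : IntervalIntegrable (fun s => Real.exp (a * (s^2-1)/2)) volume 0 1 :=
    Continuous.intervalIntegrable (by fun_prop) _ _
  have intb : IntervalIntegrable (fun s => Real.exp (b * (s^2-1)/2)) volume 0 1 :=
    Continuous.intervalIntegrable (by fun_prop) _ _
  have hpos := intervalIntegral.intervalIntegral_pos_of_pos_on
    (f := fun s => Real.exp (a * (s^2-1)/2) - Real.exp (b * (s^2-1)/2))
    (inta.sub intb) (fun s hs => ?_) one_pos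
  · rw [intervalIntegral.integral_sub inta intb] at hpos
    linarith
  · have h1 : s^2 - 1 < 0 := by nlinarith [hs.1, hs.2]
    have : b * (s^2-1)/2 < a * (s^2-1)/2 := by nlinarith
    have := Real.exp_lt_exp.2 this
    linarith

lemma eps_le_two_div (x : ℝ) (hx : 0 < x) : epsKW x ≤ 2 / x := by
  rw [epsKW_integral]
  have intf : IntervalIntegrable (fun s => Real.exp (x * (s^2-1)/2)) volume 0 1 :=
    Continuous.intervalIntegrable (by fun_prop) _ _
  have intg : IntervalIntegrable (fun s => Real.exp (x * (s-1)/2)) volume 0 1 :=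
    Continuous.intervalIntegrable (by fun_prop) _ _
  have step1 : ∫ s in (0:ℝ)..1, Real.exp (x * (s^2-1)/2)
      ≤ ∫ s in (0:ℝ)..1, Real.exp (x * (s-1)/2) := by
    apply intervalIntegral.integral_mono_on zero_le_one intf intg
    intro s hs
    apply Real.exp_le_exp.2
    nlinarith [mul_nonneg (mul_nonneg hx.le hs.1) (sub_nonneg.2 hs.2)]
  have c_ne : (x/2) ≠ 0 := by positivity
  have step2 : ∫ s in (0:ℝ)..1, Real.exp (x * (s-1)/2)
      = Real.exp (-x/2) * ((x/2)⁻¹ * (Real.exp (x/2) - 1)) := by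
    have e1 : ∀ s : ℝ, Real.exp (x * (s-1)/2) = Real.exp (-x/2) * Real.exp ((x/2) * s) := by
      intro s
      rw [← Real.exp_add]
      congr 1
      ring
    simp_rw [e1]
    rw [intervalIntegral.integral_const_mul]
    congr 1
    rw [intervalIntegral.integral_comp_mul_left (fun u => Real.exp u) c_ne]
    rw [mul_zero, mul_one, integral_exp, Real.exp_zero, smul_eq_mul]
  have step3 : Real.exp (-x/2) * ((x/2)⁻¹ * (Real.exp (x/2) - 1)) ≤ 2 / x := by
    have h1 : Real.exp (-x/2) * (Real.exp (x/2) - 1) = 1 - Real.exp (-x/2) := by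
      have e0 : -x/2 + x/2 = 0 := by ring
      rw [mul_sub, ← Real.exp_add, mul_one, e0, Real.exp_zero]
    have h2 : (x/2)⁻¹ = 2/x := by field_simp
    rw [h2]
    calc Real.exp (-x/2) * (2/x * (Real.exp (x/2) - 1))
        = (1 - Real.exp (-x/2)) * (2/x) := by rw [← h1]; ring
      _ ≤ 1 * (2/x) := by
          apply mul_le_mul_of_nonneg_right _ (by positivity)
          nlinarith [Real.exp_pos (-x/2)]
      _ = 2/x := one_mul _
  linarith

lemma eps_tendsto_atTop : Tendsto epsKW atTop (nhds 0) := by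
  apply tendsto_of_tendsto_of_tendsto_of_le_of_le' tendsto_const_nhds
    (Tendsto.div_atTop (tendsto_const_nhds (x := (2:ℝ))) tendsto_id)
  · exact Eventually.of_forall fun x => (eps_pos x).le
  · filter_upwards [eventually_gt_atTop (0:ℝ)] with x hx
    exact eps_le_two_div x hx

lemma eps_ge_linear (x : ℝ) (hx : x ≤ 0) : 1 - x/3 ≤ epsKW x := by
  have h := Summable.sum_le_tsum (Finset.range 2)
    (fun n _ => div_nonneg (pow_nonneg (by linarith) n) (dfac_pos n).le) (eps_summable x)
  have e : ∑ n ∈ Finset.range 2, (-x)^n / ((2*n+1)‼ : ℝ) = 1 - x/3 := by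
    rw [Finset.sum_range_succ, Finset.sum_range_one]
    norm_num [Nat.doubleFactorial]
    ring
  rw [e] at h
  exact h

lemma eps_tendsto_atBot : Tendsto epsKW atBot atTop := by
  apply tendsto_atTop_mono' atBot
    (f₁ := fun x : ℝ => 1 - x/3)
  · filter_upwards [eventually_le_atBot (0:ℝ)] with x hx
    exact eps_ge_linear x hx
  · have h1 : Tendsto (fun x : ℝ => -x) atBot atTop := tendsto_neg_atBot_atTop
    have h2 : Tendsto (fun x : ℝ => -x/3) atBot atTop := h1.atTop_div_const (by norm_num)
    have h3 := tendsto_atTop_add_const_left atBot 1 h2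
    apply h3.congr
    intro x
    ring

lemma eps_continuous : Continuous epsKW := by
  rw [continuous_iff_continuousAt]
  intro x₀
  have heq : epsKW = fun x => ∫ s in Set.Ioc (0:ℝ) 1, Real.exp (x * (s^2-1)/2) := by
    funext x
    rw [epsKW_integral, intervalIntegral.integral_of_le zero_le_one]
  rw [heq]
  apply MeasureTheory.continuousAt_of_dominated
    (bound := fun _ => Real.exp ((|x₀|+1)/2))
  · exact Eventually.of_forall fun x => (Continuous.aestronglyMeasurable (by fun_prop))
  · filter_upwards [Metric.ball_mem_nhds x₀ one_pos] with x hx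
    rw [ae_restrict_iff' measurableSet_Ioc]
    apply ae_of_all
    intro s hs
    rw [Real.norm_eq_abs, abs_of_pos (Real.exp_pos _)]
    apply Real.exp_le_exp.2
    have hxb : |x| ≤ |x₀| + 1 := by
      have := abs_sub_abs_le_abs_sub x x₀
      rw [Metric.mem_ball, Real.dist_eq] at hx
      linarith
    have h1 : |s^2 - 1| ≤ 1 := by
      rw [abs_le]
      constructor <;> nlinarith [hs.1, hs.2]
    calc x * (s^2-1)/2 ≤ |x * (s^2-1)/2| := le_abs_self _
      _ = |x| * |s^2-1| / 2 := by rw [abs_div, abs_mul, abs_of_pos (by norm_num : (0:ℝ)<2)]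
      _ ≤ (|x₀|+1) * 1 / 2 := by gcongr
      _ = (|x₀|+1)/2 := by ring
  · exact integrableOn_const (by rw [Real.volume_Ioc]; norm_num)
  · exact ae_of_all _ fun s => (Continuous.continuousAt (by fun_prop))


lemma eps_surj : Set.SurjOn epsKW Set.univ (Set.Ioi (0:ℝ)) := by
  intro y hy
  rw [Set.mem_Ioi] at hy
  obtain ⟨a, ha⟩ : ∃ a, y ≤ epsKW a := (eps_tendsto_atBot.eventually_ge_atTop y).exists
  obtain ⟨b, hb⟩ : ∃ b, epsKW b ≤ y := by
    have := eps_tendsto_atTop.eventually_lt_const hy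
    exact ⟨this.exists.choose, this.exists.choose_spec.le⟩
  rcases le_or_gt a b with hab | hab
  · have := intermediate_value_Icc' hab (eps_continuous.continuousOn)
    obtain ⟨x, _, hx⟩ := this ⟨hb, ha⟩
    exact ⟨x, Set.mem_univ x, hx⟩
  · have := eps_anti hab
    exact absurd (lt_of_le_of_lt ha (lt_of_lt_of_le this hb)) (lt_irrefl y)

end epsAux

/-- `ε(x) = ∑ (-x)^n/(2n+1)!!` is strictly decreasing on ℝ, with `ε(0) = 1`,
positive values, `ε(x) → ∞` as `x → -∞` and `ε(x) → 0` as `x → +∞`; hence it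
is a bijection from ℝ onto `(0, ∞)`. -/
theorem epsKW_strictAnti_bijection :
    StrictAnti epsKW ∧
    epsKW 0 = 1 ∧
    (∀ x : ℝ, 0 < epsKW x) ∧
    Tendsto epsKW atTop (nhds 0) ∧
    Tendsto epsKW atBot atTop ∧
    Set.BijOn epsKW Set.univ (Set.Ioi (0 : ℝ)) :=
  ⟨eps_anti, eps_zero, eps_pos, eps_tendsto_atTop, eps_tendsto_atBot,
    fun x _ => Set.mem_Ioi.2 (eps_pos x), eps_anti.injective.injOn, eps_surj⟩
end
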